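/- arXiv:0904.0203 — 7 statements merged into one kernel-verified Lean document; each statement's English description precedes it below -/
import Mathlib

section
/- If φ ∈ H₁ satisfies h₁φ = εφ for some scalar ε and X†φ ≠ 0, then h₂(X†φ) = ε(X†φ); that is, X†φ is an eigenvector of h₂ := N₂⁻¹ ∘ (X† ∘ h₁ ∘ X) with the same eigenvalue ε. -/
open ContinuousLinearMap

theorem ContinuousLinearMap.apply_eigenvector_of_comp_comm {R M : Type*} [Semiring R]
    [TopologicalSpace M] [AddCommMonoid M] [Module R M] {T h : M →L[R] M}
    (hcomm : T ∘L h = h ∘L T) {v : M} {ε : R} (hv : h v = ε • v) :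
    h (T v) = ε • T v := by
  rw [← comp_apply, ← hcomm, comp_apply, hv, map_smul]

theorem stmt_2_general
    {H₁ H₂ : Type*}
    [NormedAddCommGroup H₁] [InnerProductSpace ℂ H₁] [CompleteSpace H₁]
    [NormedAddCommGroup H₂] [InnerProductSpace ℂ H₂] [CompleteSpace H₂]
    (X : H₂ →L[ℂ] H₁) (h₁ : H₁ →L[ℂ] H₁)
    (hcomm : (X ∘L adjoint X) ∘L h₁ = h₁ ∘L (X ∘L adjoint X))
    (N₂inv : H₂ →L[ℂ] H₂)
    (hinv₂ : N₂inv ∘L (adjoint X ∘L X) = 1)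
    (φ : H₁) (ε : ℂ)
    (heig : h₁ φ = ε • φ) :
    (N₂inv ∘L (adjoint X ∘L h₁ ∘L X)) (adjoint X φ) = ε • (adjoint X φ) := by
  have hN₁φ : h₁ (X (adjoint X φ)) = ε • X (adjoint X φ) :=
    apply_eigenvector_of_comp_comm hcomm heig
  calc (N₂inv ∘L (adjoint X ∘L h₁ ∘L X)) (adjoint X φ)
      = (N₂inv ∘L (adjoint X ∘L X)) (ε • adjoint X φ) := by
        simp only [comp_apply, hN₁φ, map_smul]
    _ = ε • adjoint X φ := by rw [hinv₂]; rfl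

theorem stmt_2
    {H₁ H₂ : Type*}
    [NormedAddCommGroup H₁] [InnerProductSpace ℂ H₁] [CompleteSpace H₁]
    [NormedAddCommGroup H₂] [InnerProductSpace ℂ H₂] [CompleteSpace H₂]
    (X : H₂ →L[ℂ] H₁) (h₁ : H₁ →L[ℂ] H₁)
    (hsa : IsSelfAdjoint h₁)
    (hcomm : (X ∘L adjoint X) ∘L h₁ = h₁ ∘L (X ∘L adjoint X))
    (N₂inv : H₂ →L[ℂ] H₂)
    (hinv₁ : (adjoint X ∘L X) ∘L N₂inv = 1)
    (hinv₂ : N₂inv ∘L (adjoint X ∘L X) = 1)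
    (φ : H₁) (ε : ℂ)
    (heig : h₁ φ = ε • φ) (hne : adjoint X φ ≠ 0) :
    (N₂inv ∘L (adjoint X ∘L h₁ ∘L X)) (adjoint X φ) = ε • (adjoint X φ) :=
  stmt_2_general X h₁ hcomm N₂inv hinv₂ φ ε heig
end

section
/- If in addition N₁ is invertible in the algebra of bounded operators on H₁, then the strong intertwining relation X ∘ h₂ = h₁ ∘ X holds, where h₂ := N₂⁻¹ ∘ (X† ∘ h₁ ∘ X). -/
/-!
`X ∘ N₂⁻¹ ∘ X†` is the projection onto the range of `X`, and it is the identity once `N₁ = X ∘ X†`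
is (left) invertible: `X N₂⁻¹ X† = N₁⁻¹ (X X†) X N₂⁻¹ X† = N₁⁻¹ X (X† X N₂⁻¹) X† = N₁⁻¹ X X† = 1`.
Hence `X ∘ h₂ = (X N₂⁻¹ X†) h₁ X = h₁ X`.
-/

open ContinuousLinearMap

theorem ContinuousLinearMap.comp_comp_eq_one_of_comp_eq_one
    {R E F : Type*} [Semiring R] [TopologicalSpace E] [AddCommMonoid E] [Module R E]
    [TopologicalSpace F] [AddCommMonoid F] [Module R F]
    {X : E →L[R] F} {Y : F →L[R] E} {P : E →L[R] E} {Q : F →L[R] F}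
    (hP : (Y ∘L X) ∘L P = 1) (hQ : Q ∘L (X ∘L Y) = 1) :
    X ∘L P ∘L Y = 1 :=
  calc X ∘L P ∘L Y = (Q ∘L (X ∘L Y)) ∘L (X ∘L P ∘L Y) := by rw [hQ, one_def, id_comp]
    _ = Q ∘L X ∘L ((Y ∘L X) ∘L P) ∘L Y := by simp only [comp_assoc]
    _ = 1 := by rw [hP, one_def, id_comp, hQ]

theorem stmt_5_general
    {H₁ H₂ : Type*}
    [NormedAddCommGroup H₁] [InnerProductSpace ℂ H₁] [CompleteSpace H₁]
    [NormedAddCommGroup H₂] [InnerProductSpace ℂ H₂] [CompleteSpace H₂]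
    (X : H₂ →L[ℂ] H₁) (h₁ : H₁ →L[ℂ] H₁)
    (N₂inv : H₂ →L[ℂ] H₂)
    (hinv₁ : (adjoint X ∘L X) ∘L N₂inv = 1)
    (N₁inv : H₁ →L[ℂ] H₁)
    (hinv₄ : N₁inv ∘L (X ∘L adjoint X) = 1) :
    X ∘L (N₂inv ∘L (adjoint X ∘L h₁ ∘L X)) = h₁ ∘L X :=
  calc X ∘L (N₂inv ∘L (adjoint X ∘L h₁ ∘L X)) = (X ∘L N₂inv ∘L adjoint X) ∘L h₁ ∘L X := by
        simp only [comp_assoc]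
    _ = h₁ ∘L X := by rw [comp_comp_eq_one_of_comp_eq_one hinv₁ hinv₄, one_def, id_comp]

theorem stmt_5
    {H₁ H₂ : Type*}
    [NormedAddCommGroup H₁] [InnerProductSpace ℂ H₁] [CompleteSpace H₁]
    [NormedAddCommGroup H₂] [InnerProductSpace ℂ H₂] [CompleteSpace H₂]
    (X : H₂ →L[ℂ] H₁) (h₁ : H₁ →L[ℂ] H₁)
    (hsa : IsSelfAdjoint h₁)
    (hcomm : (X ∘L adjoint X) ∘L h₁ = h₁ ∘L (X ∘L adjoint X))
    (N₂inv : H₂ →L[ℂ] H₂)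
    (hinv₁ : (adjoint X ∘L X) ∘L N₂inv = 1)
    (hinv₂ : N₂inv ∘L (adjoint X ∘L X) = 1)
    (N₁inv : H₁ →L[ℂ] H₁)
    (hinv₃ : (X ∘L adjoint X) ∘L N₁inv = 1)
    (hinv₄ : N₁inv ∘L (X ∘L adjoint X) = 1) :
    X ∘L (N₂inv ∘L (adjoint X ∘L h₁ ∘L X)) = h₁ ∘L X :=
  stmt_5_general X h₁ N₂inv hinv₁ N₁inv hinv₄
end

section
/- Suppose φ ∈ H₁ is nonzero with h₁φ = εφ and X†φ ≠ 0, and suppose the eigenvalue ε is non-degenerate, i.e. every ψ ∈ H₁ with h₁ψ = εψ is a scalar multiple of φ. Then there exists a scalar α such that N₁φ = αφ and N₂(X†φ) = α(X†φ); that is, φ and X†φ are eigenvectors of N₁ and N₂ respectively with the same eigenvalue. -/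
open ContinuousLinearMap

theorem Module.End.exists_smul_eq_of_commute {R M : Type*} [CommRing R] [AddCommGroup M]
    [Module R M] {f g : Module.End R M} (hfg : Commute f g) {μ : R} {x : M}
    (hx : f x = μ • x) (hline : ∀ y, f y = μ • y → ∃ c : R, y = c • x) :
    ∃ c : R, g x = c • x :=
  hline _ <| mem_eigenspace_iff.mp <|
    mapsTo_genEigenspace_of_comm hfg μ 1 (mem_eigenspace_iff.mpr hx)

theorem stmt_8_general
    {H₁ H₂ : Type*}
    [NormedAddCommGroup H₁] [InnerProductSpace ℂ H₁] [CompleteSpace H₁]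
    [NormedAddCommGroup H₂] [InnerProductSpace ℂ H₂] [CompleteSpace H₂]
    (X : H₂ →L[ℂ] H₁) (h₁ : H₁ →L[ℂ] H₁)
    (hcomm : (X ∘L adjoint X) ∘L h₁ = h₁ ∘L (X ∘L adjoint X))
    (φ : H₁) (ε : ℂ)
    (heig : h₁ φ = ε • φ)
    (hnondeg : ∀ ψ : H₁, h₁ ψ = ε • ψ → ∃ c : ℂ, ψ = c • φ) :
    ∃ α : ℂ, (X ∘L adjoint X) φ = α • φ ∧
      (adjoint X ∘L X) (adjoint X φ) = α • (adjoint X φ) := by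
  have hcomm_end : Commute (h₁ : Module.End ℂ H₁) (X ∘L adjoint X) :=
    congrArg ((↑) : (H₁ →L[ℂ] H₁) → Module.End ℂ H₁) hcomm.symm
  obtain ⟨α, hα⟩ : ∃ α : ℂ, (X ∘L adjoint X) φ = α • φ :=
    Module.End.exists_smul_eq_of_commute hcomm_end heig hnondeg
  refine ⟨α, hα, ?_⟩
  calc (adjoint X ∘L X) (adjoint X φ) = adjoint X ((X ∘L adjoint X) φ) := rfl
    _ = α • adjoint X φ := by rw [hα, map_smul]

theorem stmt_8
    {H₁ H₂ : Type*}
    [NormedAddCommGroup H₁] [InnerProductSpace ℂ H₁] [CompleteSpace H₁]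
    [NormedAddCommGroup H₂] [InnerProductSpace ℂ H₂] [CompleteSpace H₂]
    (X : H₂ →L[ℂ] H₁) (h₁ : H₁ →L[ℂ] H₁)
    (hsa : IsSelfAdjoint h₁)
    (hcomm : (X ∘L adjoint X) ∘L h₁ = h₁ ∘L (X ∘L adjoint X))
    (N₂inv : H₂ →L[ℂ] H₂)
    (hinv₁ : (adjoint X ∘L X) ∘L N₂inv = 1)
    (hinv₂ : N₂inv ∘L (adjoint X ∘L X) = 1)
    (φ : H₁) (ε : ℂ)
    (hφ : φ ≠ 0)
    (heig : h₁ φ = ε • φ) (hne : adjoint X φ ≠ 0)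
    (hnondeg : ∀ ψ : H₁, h₁ ψ = ε • ψ → ∃ c : ℂ, ψ = c • φ) :
    ∃ α : ℂ, (X ∘L adjoint X) φ = α • φ ∧
      (adjoint X ∘L X) (adjoint X φ) = α • (adjoint X φ) :=
  stmt_8_general X h₁ hcomm φ ε heig hnondeg
end

section
/- The operator h₁ := N₁⁻¹ ∘ (X ∘ h₂ ∘ X†) is self-adjoint on H₁, satisfies the weak intertwining relation X ∘ (X† ∘ h₁ − h₂ ∘ X†) = 0, and commutes with N₁ (h₁N₁ = N₁h₁). -/
/-!
With `N₁ = X X†` and `A = X h₂ X†`, both `N₁` and `A` are self-adjoint, and `N₁` commutes with `A`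
because `X†X` commutes with `h₂`. Hence `N₁⁻¹` is self-adjoint and commutes with `A` and `N₁`, so
`h₁ = N₁⁻¹ A` is self-adjoint and commutes with `N₁`, while `X (X† h₁ - h₂ X†) = N₁ N₁⁻¹ A - A = 0`.
-/

open ContinuousLinearMap

theorem IsSelfAdjoint.units_inv {R : Type*} [Monoid R] [StarMul R] {u : Rˣ}
    (hu : IsSelfAdjoint (u : R)) : IsSelfAdjoint (↑u⁻¹ : R) := by
  have hstar : star u = u := Units.ext hu
  rw [IsSelfAdjoint, ← Units.coe_star_inv, hstar]

theorem ContinuousLinearMap.commute_comp_conj_of_commute {R E F : Type*} [Semiring R]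
    [TopologicalSpace E] [AddCommMonoid E] [Module R E]
    [TopologicalSpace F] [AddCommMonoid F] [Module R F]
    {X : E →L[R] F} {Y : F →L[R] E} {h : E →L[R] E} (hc : Commute (Y ∘L X) h) :
    Commute (X ∘L Y) (X ∘L h ∘L Y) :=
  calc (X ∘L Y) ∘L (X ∘L h ∘L Y)
      = X ∘L ((Y ∘L X) ∘L h) ∘L Y := by simp only [comp_assoc]
    _ = X ∘L (h ∘L (Y ∘L X)) ∘L Y := by rw [← mul_def, ← mul_def, hc.eq]
    _ = (X ∘L h ∘L Y) ∘L (X ∘L Y) := by simp only [comp_assoc]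

theorem stmt_9
    {H₁ H₂ : Type*}
    [NormedAddCommGroup H₁] [InnerProductSpace ℂ H₁] [CompleteSpace H₁]
    [NormedAddCommGroup H₂] [InnerProductSpace ℂ H₂] [CompleteSpace H₂]
    (X : H₂ →L[ℂ] H₁) (h₂ : H₂ →L[ℂ] H₂)
    (hsa : IsSelfAdjoint h₂)
    (hcomm : (adjoint X ∘L X) ∘L h₂ = h₂ ∘L (adjoint X ∘L X))
    (N₁inv : H₁ →L[ℂ] H₁)
    (hinv₁ : (X ∘L adjoint X) ∘L N₁inv = 1)
    (hinv₂ : N₁inv ∘L (X ∘L adjoint X) = 1) :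
    IsSelfAdjoint (N₁inv ∘L (X ∘L h₂ ∘L adjoint X)) ∧
    X ∘L (adjoint X ∘L (N₁inv ∘L (X ∘L h₂ ∘L adjoint X)) - h₂ ∘L adjoint X) = 0 ∧
    (N₁inv ∘L (X ∘L h₂ ∘L adjoint X)) ∘L (X ∘L adjoint X)
      = (X ∘L adjoint X) ∘L (N₁inv ∘L (X ∘L h₂ ∘L adjoint X)) := by
  let N₁ : (H₁ →L[ℂ] H₁)ˣ := ⟨X ∘L adjoint X, N₁inv, hinv₁, hinv₂⟩
  have hN₁ : IsSelfAdjoint (X ∘L adjoint X) := by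
    simpa only [one_def, id_comp] using (IsSelfAdjoint.one (H₂ →L[ℂ] H₂)).conj_adjoint X
  have hA : IsSelfAdjoint (X ∘L h₂ ∘L adjoint X) := hsa.conj_adjoint X
  have hN₁A : Commute (N₁ : H₁ →L[ℂ] H₁) (X ∘L h₂ ∘L adjoint X) :=
    commute_comp_conj_of_commute hcomm
  refine ⟨?_, ?_, ?_⟩
  · exact (IsSelfAdjoint.units_inv (u := N₁) hN₁ |>.commute_iff hA).mp hN₁A.units_inv_left
  · rw [comp_sub, ← comp_assoc, ← comp_assoc, hinv₁, one_def, id_comp, sub_self]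
  · exact ((Commute.refl (N₁ : H₁ →L[ℂ] H₁)).units_inv_left.mul_left hN₁A.symm).eq
end

section
/- If ψ ∈ H₂ satisfies h₂ψ = εψ for some scalar ε and Xψ ≠ 0, then h₁(Xψ) = ε(Xψ); that is, Xψ is an eigenvector of h₁ := N₁⁻¹ ∘ (X ∘ h₂ ∘ X†) with the same eigenvalue ε. -/
/-! `h₁ X = N₁⁻¹ X h₂ X† X = N₁⁻¹ X X† X h₂ = X h₂`, so `X` carries eigenvectors of `h₂` to
eigenvectors of `h₁` with the same eigenvalue. -/

open ContinuousLinearMap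

theorem comp_sandwich_comp_eq_comp_of_commute
    {R M₁ M₂ : Type*} [Semiring R]
    [TopologicalSpace M₁] [AddCommMonoid M₁] [Module R M₁]
    [TopologicalSpace M₂] [AddCommMonoid M₂] [Module R M₂]
    (X : M₂ →L[R] M₁) (Y : M₁ →L[R] M₂) (h : M₂ →L[R] M₂) (N : M₁ →L[R] M₁)
    (hcomm : (Y ∘L X) ∘L h = h ∘L (Y ∘L X)) (hinv : N ∘L (X ∘L Y) = 1) :
    (N ∘L (X ∘L h ∘L Y)) ∘L X = X ∘L h :=
  calc (N ∘L (X ∘L h ∘L Y)) ∘L X = N ∘L X ∘L (h ∘L (Y ∘L X)) := by simp only [comp_assoc]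
    _ = N ∘L X ∘L ((Y ∘L X) ∘L h) := by rw [hcomm]
    _ = (N ∘L (X ∘L Y)) ∘L X ∘L h := by simp only [comp_assoc]
    _ = X ∘L h := by rw [hinv]; rfl

theorem stmt_10_general
    {H₁ H₂ : Type*}
    [NormedAddCommGroup H₁] [InnerProductSpace ℂ H₁] [CompleteSpace H₁]
    [NormedAddCommGroup H₂] [InnerProductSpace ℂ H₂] [CompleteSpace H₂]
    (X : H₂ →L[ℂ] H₁) (h₂ : H₂ →L[ℂ] H₂)
    (hcomm : (adjoint X ∘L X) ∘L h₂ = h₂ ∘L (adjoint X ∘L X))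
    (N₁inv : H₁ →L[ℂ] H₁)
    (hinv₂ : N₁inv ∘L (X ∘L adjoint X) = 1)
    (ψ : H₂) (ε : ℂ)
    (heig : h₂ ψ = ε • ψ) :
    (N₁inv ∘L (X ∘L h₂ ∘L adjoint X)) (X ψ) = ε • (X ψ) := by
  have hintertwine := comp_sandwich_comp_eq_comp_of_commute X (adjoint X) h₂ N₁inv hcomm hinv₂
  calc (N₁inv ∘L (X ∘L h₂ ∘L adjoint X)) (X ψ)
      = ((N₁inv ∘L (X ∘L h₂ ∘L adjoint X)) ∘L X) ψ := rfl
    _ = X (h₂ ψ) := by rw [hintertwine]; rfl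
    _ = ε • X ψ := by rw [heig, map_smul]

theorem stmt_10
    {H₁ H₂ : Type*}
    [NormedAddCommGroup H₁] [InnerProductSpace ℂ H₁] [CompleteSpace H₁]
    [NormedAddCommGroup H₂] [InnerProductSpace ℂ H₂] [CompleteSpace H₂]
    (X : H₂ →L[ℂ] H₁) (h₂ : H₂ →L[ℂ] H₂)
    (hsa : IsSelfAdjoint h₂)
    (hcomm : (adjoint X ∘L X) ∘L h₂ = h₂ ∘L (adjoint X ∘L X))
    (N₁inv : H₁ →L[ℂ] H₁)
    (hinv₁ : (X ∘L adjoint X) ∘L N₁inv = 1)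
    (hinv₂ : N₁inv ∘L (X ∘L adjoint X) = 1)
    (ψ : H₂) (ε : ℂ)
    (heig : h₂ ψ = ε • ψ) (hne : X ψ ≠ 0) :
    (N₁inv ∘L (X ∘L h₂ ∘L adjoint X)) (X ψ) = ε • (X ψ) :=
  stmt_10_general X h₂ hcomm N₁inv hinv₂ ψ ε heig
end

section
/- Let χ : ℕ × Fin 2 → H be given by χ(n,i) = (1/√2)·eₙ, and let α, β be real numbers. Denote by σ the involution of ℕ × Fin 2 swapping (n,0) ↔ (n,1). Then for every f ∈ H, the family (α·⟨χ(p), f⟩ + β·⟨χ(σ(p)), f⟩)·χ(p), indexed by p ∈ ℕ × Fin 2, is summable in H with sum (α+β)·f. (This expresses that the operator h₂ = F†(α·1 + β·P₂)F on H, where F is the analysis operator of the frame (χ(p)) and P₂ is the pair-swap operator on ℓ², equals (α+β) times the identity.) -/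
/-!
Both frame vectors over `n` equal `eₙ / √2`, so `χ (σ p) = χ p` and the summand at `(n, i)` is
`((α + β) / 2) • ⟪eₙ, f⟫ • eₙ` for either `i`. Each of the two copies of `ℕ` therefore carries
`(α + β) / 2` times the basis expansion of `f`, and together they sum to `(α + β) • f`.
-/

open scoped InnerProductSpace

theorem HasSum.comp_fst {M β ι : Type*} [AddCommMonoid M] [TopologicalSpace M] [ContinuousAdd M]
    [Fintype ι] {g : β → M} {a : M} (h : HasSum g a) :
    HasSum (fun p : β × ι => g p.1) (Fintype.card ι • a) := by
  have hfiber (i : ι) : HasSum (Function.extend (fun b : β => (b, i)) g 0) a :=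
    (hasSum_extend_zero (Prod.mk_left_injective i)).2 h
  convert hasSum_sum (s := Finset.univ) fun i _ => hfiber i using 1
  · ext ⟨b, j⟩
    classical
    rw [Finset.sum_eq_single j]
    · exact ((Prod.mk_left_injective j).extend_apply g 0 b).symm
    · rintro i - hij
      refine Function.extend_apply' _ _ _ ?_
      rintro ⟨b', hb'⟩
      exact hij (Prod.ext_iff.1 hb').2
    · simp
  · simp

theorem inner_real_smul_smul {E : Type*} [NormedAddCommGroup E] [InnerProductSpace ℂ E]
    (r : ℝ) (x y : E) : ⟪r • x, y⟫_ℂ • (r • x) = (r ^ 2) • (⟪x, y⟫_ℂ • x) := by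
  rw [RCLike.real_smul_eq_coe_smul (K := ℂ) r x, inner_smul_real_left, Complex.real_smul]
  module

theorem stmt_14
    {H : Type*} [NormedAddCommGroup H] [InnerProductSpace ℂ H] [CompleteSpace H]
    (e : HilbertBasis ℕ ℂ H)
    (α β : ℝ)
    (χ : ℕ × Fin 2 → H)
    (hχ : ∀ p : ℕ × Fin 2, χ p = (Real.sqrt 2)⁻¹ • e p.1)
    (σ : ℕ × Fin 2 → ℕ × Fin 2)
    (hσ : ∀ p : ℕ × Fin 2, σ p = (p.1, 1 - p.2)) :
    ∀ f : H, HasSum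
      (fun p : ℕ × Fin 2 =>
        ((α : ℂ) * ⟪χ p, f⟫_ℂ + (β : ℂ) * ⟪χ (σ p), f⟫_ℂ) • χ p)
      ((α + β) • f) := by
  intro f
  have hχσ (p : ℕ × Fin 2) : χ (σ p) = χ p := by rw [hχ, hχ, hσ]
  have hsummand (p : ℕ × Fin 2) :
      ((α : ℂ) * ⟪χ p, f⟫_ℂ + (β : ℂ) * ⟪χ (σ p), f⟫_ℂ) • χ p
        = ((α + β) / 2) • (⟪e p.1, f⟫_ℂ • e p.1) := by
    rw [hχσ, ← add_mul, hχ, ← smul_smul, inner_real_smul_smul, inv_pow,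
      Real.sq_sqrt zero_le_two, ← Complex.ofReal_add, Complex.coe_smul, smul_smul,
      div_eq_mul_inv]
  have hexpansion : HasSum (fun n => ⟪e n, f⟫_ℂ • e n) f := by
    simpa only [e.repr_apply_apply] using e.hasSum_repr f
  have hdoubled := (hexpansion.comp_fst (ι := Fin 2)).const_smul ((α + β) / 2)
  rw [Fintype.card_fin, smul_comm, two_smul, ← add_smul, add_halves] at hdoubled
  simpa only [hsummand] using hdoubled
end

section
/- For every f ∈ H, the family (‖Λⱼ(S⁻¹f)‖²)_{j∈J} is summable and its sum lies between (1/B)‖f‖² and (1/A)‖f‖²; that is, the dual family Λ̃ⱼ = Λⱼ ∘ S⁻¹ is a (1/B, 1/A) g-frame of (H, K). -/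
/-!
Write `g = S⁻¹ f`, so that the sum in question is `P = re ⟪g, S g⟫ = re ⟪g, f⟫`.
The upper bound comes from `A ‖g‖² ≤ P ≤ ‖g‖ ‖f‖`. For the lower bound, apply the
Cauchy–Schwarz inequality to the positive semidefinite real form `re ⟪x, S y⟫` at `g` and `f`:
`‖f‖⁴ = re ⟪g, S f⟫² ≤ P · re ⟪f, S f⟫ ≤ P · B ‖f‖²`.
-/

open ContinuousLinearMap RCLike
open scoped InnerProductSpace

namespace ContinuousLinearMap

variable {𝕜 E : Type*} [RCLike 𝕜] [NormedAddCommGroup E] [InnerProductSpace 𝕜 E]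
  {S : E →L[𝕜] E}

theorem IsPositive.re_inner_sq_le (hS : S.IsPositive) (x y : E) :
    re ⟪x, S y⟫_𝕜 ^ 2 ≤ re ⟪x, S x⟫_𝕜 * re ⟪y, S y⟫_𝕜 := by
  let _ : NormedSpace ℝ E := NormedSpace.restrictScalars ℝ 𝕜 E
  let form : LinearMap.BilinForm ℝ E := LinearMap.mk₂ ℝ (fun x y => re ⟪x, S y⟫_𝕜)
    (fun _ _ _ => by simp only [inner_add_left, map_add])
    (fun _ _ _ => by
      simp only [real_smul_eq_coe_smul (K := 𝕜), inner_smul_left, conj_ofReal, re_ofReal_mul,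
        smul_eq_mul])
    (fun _ _ _ => by simp only [map_add, inner_add_right])
    (fun _ _ _ => by
      simp only [real_smul_eq_coe_smul (K := 𝕜), map_smul, inner_smul_right, re_ofReal_mul,
        smul_eq_mul])
  refine form.apply_sq_le_of_symm hS.re_inner_nonneg_right ⟨fun u v => ?_⟩ x y
  show re ⟪u, S v⟫_𝕜 = re ⟪v, S u⟫_𝕜
  rw [← hS.inner_left_eq_inner_right, ← inner_conj_symm, conj_re]

theorem mul_re_inner_map_self_le_norm_map_sq {A : ℝ} (hA : 0 ≤ A)
    (hlow : ∀ x, A * ‖x‖ ^ 2 ≤ re ⟪x, S x⟫_𝕜) (g : E) :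
    A * re ⟪g, S g⟫_𝕜 ≤ ‖S g‖ ^ 2 := by
  have hcs : re ⟪g, S g⟫_𝕜 ≤ ‖g‖ * ‖S g‖ := re_inner_le_norm g (S g)
  have hg := hlow g
  nlinarith [mul_nonneg hA (sq_nonneg ‖g‖), norm_nonneg g, norm_nonneg (S g),
    sq_nonneg (A * ‖g‖ - ‖S g‖)]

theorem IsPositive.norm_map_sq_le_mul_re_inner_map_self (hS : S.IsPositive) {B : ℝ}
    (hup : ∀ x, re ⟪x, S x⟫_𝕜 ≤ B * ‖x‖ ^ 2) (g : E) :
    ‖S g‖ ^ 2 ≤ B * re ⟪g, S g⟫_𝕜 := by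
  have hcs := hS.re_inner_sq_le g (S g)
  rw [← hS.inner_left_eq_inner_right, inner_self_eq_norm_sq] at hcs
  have hP := hS.re_inner_nonneg_right g
  rcases eq_or_ne (S g) 0 with h0 | h0
  · simp [h0]
  · nlinarith [hup (S g), pow_pos (norm_pos_iff.mpr h0) 2]

end ContinuousLinearMap

theorem stmt_19_general
    {H K : Type*}
    [NormedAddCommGroup H] [InnerProductSpace ℂ H] [CompleteSpace H]
    [NormedAddCommGroup K] [InnerProductSpace ℂ K]
    {J : Type*}
    (Λ : J → (H →L[ℂ] K))
    (A B : ℝ) (hA : 0 < A) (hAB : A ≤ B)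
    (S : H →L[ℂ] H) (hsa : IsSelfAdjoint S)
    (Sinv : H →L[ℂ] H) (hinv₁ : S ∘L Sinv = 1)
    (hsum : ∀ f : H, HasSum (fun j => ‖Λ j f‖ ^ 2) ((inner ℂ f (S f) : ℂ).re))
    (hlow : ∀ f : H, A * ‖f‖ ^ 2 ≤ (inner ℂ f (S f) : ℂ).re)
    (hup : ∀ f : H, (inner ℂ f (S f) : ℂ).re ≤ B * ‖f‖ ^ 2) :
    ∀ f : H, Summable (fun j => ‖Λ j (Sinv f)‖ ^ 2) ∧
      (1 / B) * ‖f‖ ^ 2 ≤ (∑' j, ‖Λ j (Sinv f)‖ ^ 2) ∧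
      (∑' j, ‖Λ j (Sinv f)‖ ^ 2) ≤ (1 / A) * ‖f‖ ^ 2 := by
  intro f
  have hpos : S.IsPositive := ⟨hsa.isSymmetric, fun x => by
    rw [reApplyInnerSelf, ← inner_conj_symm, conj_re]
    exact (mul_nonneg hA.le (sq_nonneg _)).trans (hlow x)⟩
  have hf : ‖f‖ ^ 2 = ‖S (Sinv f)‖ ^ 2 := by rw [show S (Sinv f) = f from congr($hinv₁ f)]
  have lower := hpos.norm_map_sq_le_mul_re_inner_map_self (𝕜 := ℂ) hup (Sinv f)
  have upper := mul_re_inner_map_self_le_norm_map_sq (𝕜 := ℂ) (S := S) hA.le hlow (Sinv f)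
  refine ⟨(hsum _).summable, ?_, ?_⟩ <;> rw [(hsum _).tsum_eq, one_div_mul_eq_div, hf]
  · exact (div_le_iff₀ (hA.trans_le hAB)).mpr (by rwa [mul_comm] at lower)
  · exact (le_div_iff₀ hA).mpr (by rwa [mul_comm] at upper)

theorem stmt_19
    {H K : Type*}
    [NormedAddCommGroup H] [InnerProductSpace ℂ H] [CompleteSpace H]
    [NormedAddCommGroup K] [InnerProductSpace ℂ K] [CompleteSpace K]
    {J : Type*} [Countable J]
    (Λ : J → (H →L[ℂ] K))
    (A B : ℝ) (hA : 0 < A) (hAB : A ≤ B)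
    (S : H →L[ℂ] H) (hsa : IsSelfAdjoint S)
    (Sinv : H →L[ℂ] H) (hinv₁ : S ∘L Sinv = 1) (hinv₂ : Sinv ∘L S = 1)
    (hsum : ∀ f : H, HasSum (fun j => ‖Λ j f‖ ^ 2) ((inner ℂ f (S f) : ℂ).re))
    (hlow : ∀ f : H, A * ‖f‖ ^ 2 ≤ (inner ℂ f (S f) : ℂ).re)
    (hup : ∀ f : H, (inner ℂ f (S f) : ℂ).re ≤ B * ‖f‖ ^ 2) :
    ∀ f : H, Summable (fun j => ‖Λ j (Sinv f)‖ ^ 2) ∧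
      (1 / B) * ‖f‖ ^ 2 ≤ (∑' j, ‖Λ j (Sinv f)‖ ^ 2) ∧
      (∑' j, ‖Λ j (Sinv f)‖ ^ 2) ≤ (1 / A) * ‖f‖ ^ 2 :=
  stmt_19_general Λ A B hA hAB S hsa Sinv hinv₁ hsum hlow hup
end
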